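/- arXiv:1407.6971 — 4 statements merged into one kernel-verified Lean document; each statement's English description precedes it below -/
import Mathlib

section
/- Let γ < 0, C₂ > 0, and let y : ℝ → ℝ be nonnegative and continuous on [0,∞) with y(0) = y₀ > 0, differentiable at every t ≥ 0 where y(t) > 0, and satisfying y'(t) + 2C₂ y(t)^{γ+1} ≤ 0 at every t ≥ 0 where y(t) > 0. Then for every t ≥ 0, y(t) ≤ [y₀^{|γ|} − 2|γ|C₂ t]₊^{1/|γ|}, where [h]₊ = max(h, 0); in particular y(t) = 0 for all t ≥ y₀^{|γ|}/(2|γ|C₂). -/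
/-!
With `a = |γ|`, the inequality says that the Lyapunov function `u ↦ y u ^ a + 2 a C₂ u` is
nonincreasing on every interval where `y > 0`, since its derivative is
`a y^(a-1) (y' + 2 C₂ y^(1-a)) ≤ 0`. Once `y` vanishes it cannot become positive again: from the
last zero `s₀` before a time `t` with `y t > 0`, the Lyapunov function would rise from `2 a C₂ s₀`
to a value exceeding `2 a C₂ t`. So `y t ^ a ≤ y₀ ^ a - 2 a C₂ t` whenever `y t > 0`.
-/

open Set

section Lyapunov

variable {y : ℝ → ℝ} {a C : ℝ}

theorem hasDerivAt_rpow_add_mul {x : ℝ} (hd : DifferentiableAt ℝ y x) (hyx : 0 < y x) :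
    HasDerivAt (fun u => y u ^ a + 2 * a * C * u)
      (a * y x ^ (a - 1) * (deriv y x + 2 * C * y x ^ (1 - a))) x := by
  have hinv : y x ^ (a - 1) * y x ^ (1 - a) = 1 := by
    rw [← Real.rpow_add hyx, sub_add_sub_cancel', sub_self, Real.rpow_zero]
  refine ((hd.hasDerivAt.rpow_const (p := a) (Or.inl hyx.ne')).add
    ((hasDerivAt_id x).const_mul (2 * a * C))).congr_deriv ?_
  linear_combination (2 * a * C) * hinv.symm

theorem antitoneOn_rpow_add_mul (ha : 0 ≤ a) {s t : ℝ}
    (hcont : ContinuousOn y (Icc s t)) (hpos : ∀ u ∈ Ioo s t, 0 < y u)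
    (hdiff : ∀ u ∈ Ioo s t, DifferentiableAt ℝ y u)
    (hineq : ∀ u ∈ Ioo s t, deriv y u + 2 * C * y u ^ (1 - a) ≤ 0) :
    AntitoneOn (fun u => y u ^ a + 2 * a * C * u) (Icc s t) := by
  have hderiv (u : ℝ) (hu : u ∈ Ioo s t) :=
    hasDerivAt_rpow_add_mul (C := C) (a := a) (hdiff u hu) (hpos u hu)
  refine antitoneOn_of_deriv_nonpos (convex_Icc s t)
    ((hcont.rpow_const fun _ _ => Or.inr ha).add (by fun_prop)) ?_ ?_ <;> rw [interior_Icc]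
  · exact fun u hu => (hderiv u hu).differentiableAt.differentiableWithinAt
  · intro u hu
    rw [(hderiv u hu).deriv]
    exact mul_nonpos_of_nonneg_of_nonpos (by have := hpos u hu; positivity) (hineq u hu)

theorem rpow_add_mul_le_of_pos (ha : 0 < a) (hC : 0 ≤ C)
    (hnn : ∀ t, 0 ≤ t → 0 ≤ y t) (hcont : ContinuousOn y (Ici 0))
    (hdiff : ∀ t, 0 ≤ t → 0 < y t → DifferentiableAt ℝ y t)
    (hineq : ∀ t, 0 ≤ t → 0 < y t → deriv y t + 2 * C * y t ^ (1 - a) ≤ 0)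
    {t : ℝ} (ht : 0 ≤ t) (hyt : 0 < y t) :
    y t ^ a + 2 * a * C * t ≤ y 0 ^ a := by
  have decrease (s : ℝ) (hs : s ∈ Icc 0 t) (hpos : ∀ u ∈ Ioo s t, 0 < y u) :
      y t ^ a + 2 * a * C * t ≤ y s ^ a + 2 * a * C * s :=
    antitoneOn_rpow_add_mul ha.le (hcont.mono fun u hu => hs.1.trans hu.1) hpos
      (fun u hu => hdiff u (hs.1.trans hu.1.le) (hpos u hu))
      (fun u hu => hineq u (hs.1.trans hu.1.le) (hpos u hu))
      ⟨le_rfl, hs.2⟩ (right_mem_Icc.2 hs.2) hs.2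
  set Z := Icc 0 t ∩ y ⁻¹' {0}
  have pos_of_notMem {u : ℝ} (hu : u ∈ Icc 0 t) (hZ : u ∉ Z) : 0 < y u :=
    (hnn u hu.1).lt_of_ne fun h => hZ ⟨hu, h.symm⟩
  rcases Z.eq_empty_or_nonempty with hZ | hZ
  · simpa using decrease 0 ⟨le_rfl, ht⟩ fun u hu =>
      pos_of_notMem (Ioo_subset_Icc_self hu) (hZ ▸ id)
  · have hZbdd : BddAbove Z := bddAbove_Icc.mono inter_subset_left
    have hZclosed : IsClosed Z :=
      (hcont.mono Icc_subset_Ici_self).preimage_isClosed_of_isClosed isClosed_Icc isClosed_singleton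
    obtain ⟨hs₀, hys₀⟩ := hZclosed.csSup_mem hZ hZbdd
    have h := decrease _ hs₀ fun u hu =>
      pos_of_notMem ⟨hs₀.1.trans hu.1.le, hu.2.le⟩ fun hu' => (le_csSup hZbdd hu').not_gt hu.1
    rw [hys₀, Real.zero_rpow ha.ne'] at h
    have hC' : 0 ≤ 2 * a * C := by positivity
    linarith [Real.rpow_pos_of_pos hyt a, mul_le_mul_of_nonneg_left hs₀.2 hC']

end Lyapunov

theorem stmt5_general (γ C₂ y₀ : ℝ) (hγ : γ < 0) (hC₂ : 0 < C₂) (y : ℝ → ℝ)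
    (hy0 : y 0 = y₀)
    (hnn : ∀ t, 0 ≤ t → 0 ≤ y t)
    (hcont : ContinuousOn y (Ici 0))
    (hdiff : ∀ t, 0 ≤ t → 0 < y t → DifferentiableAt ℝ y t)
    (hineq : ∀ t, 0 ≤ t → 0 < y t → deriv y t + 2 * C₂ * y t ^ (γ + 1) ≤ 0) :
    (∀ t, 0 ≤ t → y t ≤ (max (y₀ ^ |γ| - 2 * |γ| * C₂ * t) 0) ^ ((1:ℝ) / |γ|)) ∧
    (∀ t, y₀ ^ |γ| / (2 * |γ| * C₂) ≤ t → y t = 0) := by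
  have ha : 0 < |γ| := abs_pos.2 hγ.ne
  have hexp : γ + 1 = 1 - |γ| := by rw [abs_of_neg hγ]; ring
  rw [hexp] at hineq
  have bound (t : ℝ) (ht : 0 ≤ t) :
      y t ≤ (max (y₀ ^ |γ| - 2 * |γ| * C₂ * t) 0) ^ ((1:ℝ) / |γ|) := by
    rcases (hnn t ht).eq_or_lt with hyt | hyt
    · rw [← hyt]; positivity
    rw [one_div, Real.le_rpow_inv_iff_of_pos (hnn t ht) (le_max_right _ _) ha, ← hy0]
    have := rpow_add_mul_le_of_pos ha hC₂.le hnn hcont hdiff hineq ht hyt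
    exact le_max_of_le_left (by linarith)
  refine ⟨bound, fun t ht => ?_⟩
  have hc : 0 < 2 * |γ| * C₂ := by positivity
  have ht₀ : 0 ≤ t := le_trans (div_nonneg (Real.rpow_nonneg (hy0 ▸ hnn 0 le_rfl) _) hc.le) ht
  have hmax : max (y₀ ^ |γ| - 2 * |γ| * C₂ * t) 0 = 0 :=
    max_eq_right (by linarith [(div_le_iff₀' hc).1 ht])
  have := bound t ht₀
  rw [hmax, Real.zero_rpow (one_div_pos.2 ha).ne'] at this
  exact this.antisymm (hnn t ht₀)

/-- Let `γ < 0`, `C₂ > 0`, and let `y : ℝ → ℝ` be nonnegative and continuous on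
`[0,∞)` with `y 0 = y₀ > 0`, differentiable at every `t ≥ 0` where `y t > 0`, and satisfying
`y' + 2C₂ y^{γ+1} ≤ 0` at every `t ≥ 0` where `y t > 0`. Then for every `t ≥ 0`,
`y t ≤ [y₀^{|γ|} − 2|γ|C₂ t]₊^{1/|γ|}`; in particular `y t = 0` for all
`t ≥ y₀^{|γ|}/(2|γ|C₂)`. -/
theorem stmt5 (γ C₂ y₀ : ℝ) (hγ : γ < 0) (hC₂ : 0 < C₂) (y : ℝ → ℝ)
    (hy0 : y 0 = y₀) (hy₀ : 0 < y₀)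
    (hnn : ∀ t, 0 ≤ t → 0 ≤ y t)
    (hcont : ContinuousOn y (Ici 0))
    (hdiff : ∀ t, 0 ≤ t → 0 < y t → DifferentiableAt ℝ y t)
    (hineq : ∀ t, 0 ≤ t → 0 < y t → deriv y t + 2 * C₂ * y t ^ (γ + 1) ≤ 0) :
    (∀ t, 0 ≤ t → y t ≤ (max (y₀ ^ |γ| - 2 * |γ| * C₂ * t) 0) ^ ((1:ℝ) / |γ|)) ∧
    (∀ t, y₀ ^ |γ| / (2 * |γ| * C₂) ≤ t → y t = 0) :=
  stmt5_general γ C₂ y₀ hγ hC₂ y hy0 hnn hcont hdiff hineq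
end

section
/- Let γ > 0, C₂ > 0, z₀ > 0, and let A be a real number with 0 < A < C₂ z₀^{2γ+1}; set B = 2γC₂ z₀^{2γ} − 2γA/z₀ (so that B > 0). Let z : ℝ → ℝ be nonnegative and differentiable on [0,∞) with z(0) = z₀, satisfying z'(t) + C₂ z(t)^{2γ+1} ≤ A (1 + Bt)^{−(2γ+1)/(2γ)} for all t ≥ 0. Then z(t) ≤ z₀ (1 + Bt)^{−1/(2γ)} for all t ≥ 0. -/
/-!
`w(t) = z₀ (1 + B t)^{-1/(2γ)}` solves the equation `w' + C₂ w^{2γ+1} = A (1 + B t)^{-(2γ+1)/(2γ)}`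
exactly: the choice of `B` is what makes the coefficient of `(1 + B t)^{-(2γ+1)/(2γ)}` in
`w' + C₂ w^{2γ+1}` equal to `A`. Since `y ↦ C₂ y^{2γ+1}` is monotone on `[0, ∞)`, `z` is a
subsolution and `w` a solution of the same equation with `z(0) = w(0)`, so `z ≤ w` by comparison.
-/

open Set Filter Topology

theorem image_le_of_deriv_add_le_of_le_deriv_add {F g z w w' : ℝ → ℝ} {a b c : ℝ}
    (hF : MonotoneOn F (Ici c)) (hwc : ∀ x ∈ Ico a b, c ≤ w x)
    (hz : ∀ x ∈ Icc a b, DifferentiableAt ℝ z x) (hw : ∀ x ∈ Icc a b, HasDerivAt w (w' x) x)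
    (ha : z a ≤ w a)
    (hz' : ∀ x ∈ Ico a b, deriv z x + F (z x) ≤ g x)
    (hw' : ∀ x ∈ Ico a b, g x ≤ w' x + F (w x)) :
    ∀ x ∈ Icc a b, z x ≤ w x := by
  intro x hx
  -- The perturbation makes the derivative inequality strict at a contact point.
  have hperturbed : ∀ ε > 0, z x ≤ w x + ε * (1 + (x - a)) := by
    intro ε hε
    have hB : ∀ y ∈ Icc a b,
        HasDerivAt (fun y => w y + ε * (1 + (y - a))) (w' y + ε) y := fun y hy =>
      ((hw y hy).add ((((hasDerivAt_id' y).sub_const a).const_add 1).const_mul ε)).congr_deriv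
        (by ring)
    refine image_le_of_deriv_right_lt_deriv_boundary' (f' := deriv z)
      (fun y hy => (hz y hy).continuousAt.continuousWithinAt)
      (fun y hy => (hz y (Ico_subset_Icc_self hy)).hasDerivAt.hasDerivWithinAt)
      (by simpa using ha.trans (le_add_of_nonneg_right hε.le))
      (fun y hy => (hB y hy).continuousAt.continuousWithinAt)
      (fun y hy => (hB y (Ico_subset_Icc_self hy)).hasDerivWithinAt) ?_ hx
    intro y hy hcontact
    have hwz : w y ≤ z y := by
      rw [hcontact]
      nlinarith [hy.1]
    have hFwz := hF (hwc y hy) ((hwc y hy).trans hwz) hwz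
    linarith [hz' y hy, hw' y hy]
  have hlim : Tendsto (fun ε => w x + ε * (1 + (x - a))) (𝓝[>] 0) (𝓝 (w x)) := by
    refine (Continuous.tendsto' ?_ 0 _ (by simp)).mono_left nhdsWithin_le_nhds
    fun_prop
  exact ge_of_tendsto hlim (eventually_nhdsWithin_of_forall hperturbed)

noncomputable def decayProfile (γ z₀ B t : ℝ) : ℝ :=
  z₀ * (1 + B * t) ^ (-(1 / (2 * γ)))

theorem decayProfile_nonneg {γ z₀ B t : ℝ} (hz₀ : 0 ≤ z₀) (ht : 0 ≤ 1 + B * t) :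
    0 ≤ decayProfile γ z₀ B t :=
  mul_nonneg hz₀ (Real.rpow_nonneg ht _)

theorem decayProfile_rpow {γ z₀ B t : ℝ} (hγ : γ ≠ 0) (hz₀ : 0 ≤ z₀) (ht : 0 ≤ 1 + B * t) :
    decayProfile γ z₀ B t ^ (2 * γ + 1) =
      z₀ ^ (2 * γ + 1) * (1 + B * t) ^ (-((2 * γ + 1) / (2 * γ))) := by
  rw [decayProfile, Real.mul_rpow hz₀ (Real.rpow_nonneg ht _), ← Real.rpow_mul ht]
  congr 2
  field_simp

theorem hasDerivAt_decayProfile {γ z₀ B t : ℝ} (hγ : γ ≠ 0) (ht : 0 < 1 + B * t) :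
    HasDerivAt (decayProfile γ z₀ B)
      (-(z₀ * B / (2 * γ)) * (1 + B * t) ^ (-((2 * γ + 1) / (2 * γ)))) t := by
  have hbase : HasDerivAt (fun s => 1 + B * s) B t := by
    simpa using ((hasDerivAt_id t).const_mul B).const_add 1
  have hexp : -(1 / (2 * γ)) - 1 = -((2 * γ + 1) / (2 * γ)) := by
    field_simp
    ring
  refine ((hbase.rpow_const (p := -(1 / (2 * γ))) (Or.inl ht.ne')).const_mul z₀).congr_deriv ?_
  rw [hexp]
  ring

theorem hasDerivAt_decayProfile_eq {γ C₂ z₀ A B t : ℝ} (hγ : γ ≠ 0) (hz₀ : 0 < z₀)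
    (hB : B = 2 * γ * C₂ * z₀ ^ (2 * γ) - 2 * γ * A / z₀) (ht : 0 < 1 + B * t) :
    HasDerivAt (decayProfile γ z₀ B)
      (A * (1 + B * t) ^ (-((2 * γ + 1) / (2 * γ))) -
        C₂ * decayProfile γ z₀ B t ^ (2 * γ + 1)) t := by
  have hcoeff : z₀ * B / (2 * γ) = C₂ * z₀ ^ (2 * γ + 1) - A := by
    rw [hB, Real.rpow_add_one hz₀.ne']
    field_simp
  convert hasDerivAt_decayProfile (z₀ := z₀) hγ ht using 1
  rw [decayProfile_rpow hγ hz₀.le ht.le, hcoeff]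
  ring

theorem stmt7_general (γ C₂ z₀ A : ℝ) (hγ : 0 < γ) (hC₂ : 0 < C₂) (hz₀ : 0 < z₀)
    (hA' : A < C₂ * z₀ ^ (2 * γ + 1))
    (B : ℝ) (hB : B = 2 * γ * C₂ * z₀ ^ (2 * γ) - 2 * γ * A / z₀)
    (z : ℝ → ℝ) (hz0 : z 0 = z₀)
    (hdiff : ∀ t, 0 ≤ t → DifferentiableAt ℝ z t)
    (hineq : ∀ t, 0 ≤ t →
      deriv z t + C₂ * z t ^ (2 * γ + 1) ≤ A * (1 + B * t) ^ (-((2 * γ + 1) / (2 * γ)))) :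
    ∀ t, 0 ≤ t → z t ≤ z₀ * (1 + B * t) ^ (-(1 / (2 * γ))) := by
  have hB_pos : 0 < B := by
    have hB' : B = 2 * γ / z₀ * (C₂ * z₀ ^ (2 * γ + 1) - A) := by
      rw [hB, Real.rpow_add_one hz₀.ne']
      field_simp
    rw [hB']
    exact mul_pos (by positivity) (sub_pos.mpr hA')
  have hbase : ∀ s, 0 ≤ s → 0 < 1 + B * s := fun s hs => by positivity
  have hF : MonotoneOn (fun y => C₂ * y ^ (2 * γ + 1)) (Ici 0) := fun x hx y _ hxy =>
    mul_le_mul_of_nonneg_left (Real.rpow_le_rpow hx hxy (by positivity)) hC₂.le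
  intro t ht
  exact image_le_of_deriv_add_le_of_le_deriv_add hF
    (fun x hx => decayProfile_nonneg hz₀.le (hbase x hx.1).le)
    (fun x hx => hdiff x hx.1)
    (fun x hx => hasDerivAt_decayProfile_eq hγ.ne' hz₀ hB (hbase x hx.1))
    (by simp [hz0, decayProfile]) (fun x hx => hineq x hx.1) (fun x _ => (sub_add_cancel _ _).ge)
    t ⟨ht, le_rfl⟩

/-- Let `γ > 0`, `C₂ > 0`, `z₀ > 0`, `0 < A < C₂ z₀^{2γ+1}`, and set
`B = 2γC₂ z₀^{2γ} − 2γA/z₀` (so `B > 0`).  Let `z : ℝ → ℝ` be nonnegative and differentiable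
on `[0,∞)` with `z 0 = z₀`, satisfying `z' + C₂ z^{2γ+1} ≤ A (1 + Bt)^{−(2γ+1)/(2γ)}` for all
`t ≥ 0`.  Then `z t ≤ z₀ (1 + Bt)^{−1/(2γ)}` for all `t ≥ 0`. -/
theorem stmt7 (γ C₂ z₀ A : ℝ) (hγ : 0 < γ) (hC₂ : 0 < C₂) (hz₀ : 0 < z₀)
    (hA : 0 < A) (hA' : A < C₂ * z₀ ^ (2 * γ + 1))
    (B : ℝ) (hB : B = 2 * γ * C₂ * z₀ ^ (2 * γ) - 2 * γ * A / z₀)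
    (z : ℝ → ℝ) (hz0 : z 0 = z₀)
    (hnn : ∀ t, 0 ≤ t → 0 ≤ z t)
    (hdiff : ∀ t, 0 ≤ t → DifferentiableAt ℝ z t)
    (hineq : ∀ t, 0 ≤ t →
      deriv z t + C₂ * z t ^ (2 * γ + 1) ≤ A * (1 + B * t) ^ (-((2 * γ + 1) / (2 * γ)))) :
    ∀ t, 0 ≤ t → z t ≤ z₀ * (1 + B * t) ^ (-(1 / (2 * γ))) :=
  stmt7_general γ C₂ z₀ A hγ hC₂ hz₀ hA' B hB z hz0 hdiff hineq
end

section
/- Let γ < 0, C₂ > 0, z₀ > 0, and let A be a real number with 0 < A < C₂ z₀^{2γ+1}; set B = 2γA/z₀ − 2γC₂ z₀^{2γ} (so that B > 0). Let z : ℝ → ℝ be nonnegative and differentiable on [0, 1/B) with z(0) = z₀, satisfying z'(t) + C₂ z(t)^{2γ+1} ≤ A (1 − Bt)^{−(2γ+1)/(2γ)} for all t ∈ [0, 1/B). Then z(t) ≤ z₀ (1 − Bt)^{−1/(2γ)} for all t ∈ [0, 1/B) (note that −1/(2γ) = 1/(2|γ|) > 0, so the bound vanishes as t → 1/B). -/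
/-!
The profile `w t = z₀ (1 - B t) ^ (-1 / (2γ))` solves
`w' + C₂ w ^ (2γ + 1) = A (1 - B t) ^ (-(2γ + 1) / (2γ))` exactly (this is what the value of `B`
is chosen for) and `w 0 = z₀`, so `z` is a subsolution of the same equation. On `[0, t]` the
profile is decreasing, hence bounded below by `w t > 0`, where `y ↦ y ^ (2γ + 1)` is Lipschitz.
So wherever `z > w` we get `(z - w)' ≤ K (z - w)`, and comparing `z - w` with the barriers
`ε exp ((K + 1) s)` shows that `z - w` never becomes positive.
-/

open Set

theorem Real.abs_rpow_sub_rpow_le_of_le_one {p m x y : ℝ} (hp : p ≤ 1) (hm : 0 < m)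
    (hx : m ≤ x) (hy : m ≤ y) : |y ^ p - x ^ p| ≤ |p| * m ^ (p - 1) * |y - x| := by
  have hderiv : ∀ u ∈ Ici m, HasDerivWithinAt (· ^ p) (p * u ^ (p - 1)) (Ici m) u :=
    fun u hu => (Real.hasDerivAt_rpow_const (Or.inl (hm.trans_le hu).ne')).hasDerivWithinAt
  have hbound : ∀ u ∈ Ici m, ‖p * u ^ (p - 1)‖ ≤ |p| * m ^ (p - 1) := fun u hu => by
    rw [Real.norm_eq_abs, abs_mul, abs_of_pos (Real.rpow_pos_of_pos (hm.trans_le hu) _)]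
    exact mul_le_mul_of_nonneg_left
      (Real.rpow_le_rpow_of_nonpos hm hu (by linarith)) (abs_nonneg p)
  exact (convex_Ici m).norm_image_sub_le_of_norm_hasDerivWithin_le hderiv hbound hx hy

theorem nonpos_of_hasDerivWithinAt_le_mul_of_pos {d d' : ℝ → ℝ} {a b K : ℝ}
    (hcont : ContinuousOn d (Icc a b))
    (hderiv : ∀ x ∈ Ico a b, HasDerivWithinAt d (d' x) (Ici x) x) (ha : d a ≤ 0)
    (hbound : ∀ x ∈ Ico a b, 0 < d x → d' x ≤ K * d x) : ∀ x ∈ Icc a b, d x ≤ 0 := by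
  intro x hx
  set L := K + 1
  -- The barrier `ε exp (L y)` grows strictly faster than `d` wherever they touch.
  have hbarrier : ∀ ε > 0, d x ≤ ε * Real.exp (L * x) := by
    intro ε hε
    have hB : ∀ y, HasDerivAt (fun y => ε * Real.exp (L * y)) (ε * Real.exp (L * y) * L) y :=
      fun y => (((hasDerivAt_id' y).const_mul L).exp.const_mul ε).congr_deriv (by ring)
    refine image_le_of_deriv_right_lt_deriv_boundary' hcont hderiv
      (ha.trans (by positivity)) (fun y _ => (hB y).continuousAt.continuousWithinAt)
      (fun y _ => (hB y).hasDerivWithinAt) (fun y hy hcontact => ?_) hx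
    have hpos : 0 < ε * Real.exp (L * y) := by positivity
    calc d' y ≤ K * d y := hbound y hy (hcontact ▸ hpos)
      _ < ε * Real.exp (L * y) * L := by rw [hcontact]; nlinarith
  refine le_of_forall_pos_le_add fun ε hε => ?_
  simpa [div_mul_cancel₀ _ (Real.exp_ne_zero _)] using
    hbarrier (ε / Real.exp (L * x)) (by positivity)

noncomputable def extinctionProfile (γ z₀ B t : ℝ) : ℝ := z₀ * (1 - B * t) ^ (-(1 / (2 * γ)))

theorem extinctionProfile_zero (γ z₀ B : ℝ) : extinctionProfile γ z₀ B 0 = z₀ := by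
  simp [extinctionProfile]

theorem extinctionProfile_pos {γ z₀ B t : ℝ} (hz₀ : 0 < z₀) (ht : 0 < 1 - B * t) :
    0 < extinctionProfile γ z₀ B t :=
  mul_pos hz₀ (Real.rpow_pos_of_pos ht _)

theorem extinctionProfile_le_of_le {γ z₀ B s t : ℝ} (hγ : γ < 0) (hz₀ : 0 ≤ z₀) (hB : 0 ≤ B)
    (hst : s ≤ t) (ht : 0 < 1 - B * t) :
    extinctionProfile γ z₀ B t ≤ extinctionProfile γ z₀ B s := by
  have he : 0 ≤ -(1 / (2 * γ)) := by
    rw [neg_nonneg]; exact div_nonpos_of_nonneg_of_nonpos zero_le_one (by linarith)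
  exact mul_le_mul_of_nonneg_left
    (Real.rpow_le_rpow ht.le (by nlinarith) he) hz₀

theorem hasDerivAt_extinctionProfile {γ C₂ z₀ A B t : ℝ} (hγ : γ ≠ 0) (hz₀ : 0 < z₀)
    (hB : B = 2 * γ * A / z₀ - 2 * γ * C₂ * z₀ ^ (2 * γ)) (ht : 0 < 1 - B * t) :
    HasDerivAt (extinctionProfile γ z₀ B)
      (A * (1 - B * t) ^ (-((2 * γ + 1) / (2 * γ)))
        - C₂ * extinctionProfile γ z₀ B t ^ (2 * γ + 1)) t := by
  set e := -(1 / (2 * γ)) with he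
  set q := -((2 * γ + 1) / (2 * γ)) with hq
  set u := 1 - B * t
  have hexp : e - 1 = q := by rw [he, hq]; field_simp; ring
  have hcoef : z₀ * (e * -B) = A - C₂ * (z₀ ^ (2 * γ) * z₀) := by
    rw [he, hB]; field_simp
  have hpow : extinctionProfile γ z₀ B t ^ (2 * γ + 1) = z₀ ^ (2 * γ) * z₀ * u ^ q := by
    rw [extinctionProfile, Real.mul_rpow hz₀.le (Real.rpow_nonneg ht.le _),
      ← Real.rpow_mul ht.le, Real.rpow_add_one hz₀.ne', hq]
    congr 2; field_simp
  have hlin : HasDerivAt (fun s => 1 - B * s) (-B) t := by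
    simpa using ((hasDerivAt_id' t).const_mul B).const_sub 1
  refine ((hlin.rpow_const (p := e) (Or.inl ht.ne')).const_mul z₀).congr_deriv ?_
  rw [hpow, hexp]
  linear_combination u ^ q * hcoef

theorem le_of_hasDerivWithinAt_add_mul_rpow_le {f g f' g' : ℝ → ℝ} {a b C p m : ℝ}
    (hC : 0 ≤ C) (hp : p ≤ 1) (hm : 0 < m) (hgm : ∀ x ∈ Icc a b, m ≤ g x)
    (hf : ContinuousOn f (Icc a b)) (hg : ContinuousOn g (Icc a b))
    (hf' : ∀ x ∈ Ico a b, HasDerivWithinAt f (f' x) (Ici x) x)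
    (hg' : ∀ x ∈ Ico a b, HasDerivWithinAt g (g' x) (Ici x) x) (ha : f a ≤ g a)
    (hineq : ∀ x ∈ Ico a b, f' x + C * f x ^ p ≤ g' x + C * g x ^ p) :
    ∀ x ∈ Icc a b, f x ≤ g x := by
  have hd := nonpos_of_hasDerivWithinAt_le_mul_of_pos (hf.sub hg)
    (fun x hx => (hf' x hx).sub (hg' x hx)) (sub_nonpos.mpr ha)
    (K := C * (|p| * m ^ (p - 1))) fun x hx hfg => ?_
  · exact fun x hx => sub_nonpos.mp (hd x hx)
  rw [Pi.sub_apply, sub_pos] at hfg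
  have hgx := hgm x (Ico_subset_Icc_self hx)
  have hlip := Real.abs_rpow_sub_rpow_le_of_le_one hp hm hgx (hgx.trans hfg.le)
  rw [abs_of_pos (sub_pos.mpr hfg)] at hlip
  calc f' x - g' x ≤ C * (g x ^ p - f x ^ p) := by linarith [hineq x hx]
    _ ≤ C * |f x ^ p - g x ^ p| := by gcongr; rw [abs_sub_comm]; exact le_abs_self _
    _ ≤ C * (|p| * m ^ (p - 1) * (f x - g x)) := by gcongr
    _ = C * (|p| * m ^ (p - 1)) * (f - g) x := by simp only [Pi.sub_apply]; ring

theorem stmt8_general (γ C₂ z₀ A : ℝ) (hγ : γ < 0) (hC₂ : 0 < C₂) (hz₀ : 0 < z₀)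
    (B : ℝ) (hB : B = 2 * γ * A / z₀ - 2 * γ * C₂ * z₀ ^ (2 * γ))
    (z : ℝ → ℝ) (hz0 : z 0 = z₀)
    (hdiff : ∀ t ∈ Ico 0 (1 / B), DifferentiableAt ℝ z t)
    (hineq : ∀ t ∈ Ico 0 (1 / B),
      deriv z t + C₂ * z t ^ (2 * γ + 1) ≤ A * (1 - B * t) ^ (-((2 * γ + 1) / (2 * γ)))) :
    ∀ t ∈ Ico 0 (1 / B), z t ≤ z₀ * (1 - B * t) ^ (-(1 / (2 * γ))) := by
  intro t ⟨ht0, htB⟩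
  have hB0 : 0 < B := one_div_pos.mp (ht0.trans_lt htB)
  have hsub : Icc 0 t ⊆ Ico 0 (1 / B) := fun s hs => ⟨hs.1, hs.2.trans_lt htB⟩
  have hpos : ∀ s ∈ Icc 0 t, 0 < 1 - B * s := fun s hs => by
    linarith [(lt_div_iff₀' hB0).mp (hsub hs).2]
  have htt : t ∈ Icc 0 t := right_mem_Icc.mpr ht0
  have hw := fun s hs => hasDerivAt_extinctionProfile (A := A) (C₂ := C₂) hγ.ne hz₀ hB (hpos s hs)
  refine le_of_hasDerivWithinAt_add_mul_rpow_le (p := 2 * γ + 1) hC₂.le (by linarith)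
    (extinctionProfile_pos hz₀ (hpos t htt))
    (fun s hs => extinctionProfile_le_of_le hγ hz₀.le hB0.le hs.2 (hpos t htt))
    (fun s hs => (hdiff s (hsub hs)).continuousAt.continuousWithinAt)
    (fun s hs => (hw s hs).continuousAt.continuousWithinAt)
    (fun s hs => (hdiff s (hsub (Ico_subset_Icc_self hs))).hasDerivAt.hasDerivWithinAt)
    (fun s hs => (hw s (Ico_subset_Icc_self hs)).hasDerivWithinAt)
    (by rw [hz0, extinctionProfile_zero])
    (fun s hs => ?_) t htt
  linarith [hineq s (hsub (Ico_subset_Icc_self hs))]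

/-- Let `γ < 0`, `C₂ > 0`, `z₀ > 0`, `0 < A < C₂ z₀^{2γ+1}`, and set
`B = 2γA/z₀ − 2γC₂ z₀^{2γ}` (so `B > 0`).  Let `z : ℝ → ℝ` be nonnegative and differentiable
on `[0, 1/B)` with `z 0 = z₀`, satisfying `z' + C₂ z^{2γ+1} ≤ A (1 − Bt)^{−(2γ+1)/(2γ)}` on
`[0, 1/B)`.  Then `z t ≤ z₀ (1 − Bt)^{−1/(2γ)}` for all `t ∈ [0, 1/B)`. -/
theorem stmt8 (γ C₂ z₀ A : ℝ) (hγ : γ < 0) (hC₂ : 0 < C₂) (hz₀ : 0 < z₀)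
    (hA : 0 < A) (hA' : A < C₂ * z₀ ^ (2 * γ + 1))
    (B : ℝ) (hB : B = 2 * γ * A / z₀ - 2 * γ * C₂ * z₀ ^ (2 * γ))
    (z : ℝ → ℝ) (hz0 : z 0 = z₀)
    (hnn : ∀ t ∈ Ico 0 (1 / B), 0 ≤ z t)
    (hdiff : ∀ t ∈ Ico 0 (1 / B), DifferentiableAt ℝ z t)
    (hineq : ∀ t ∈ Ico 0 (1 / B),
      deriv z t + C₂ * z t ^ (2 * γ + 1) ≤ A * (1 - B * t) ^ (-((2 * γ + 1) / (2 * γ)))) :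
    ∀ t ∈ Ico 0 (1 / B), z t ≤ z₀ * (1 - B * t) ^ (-(1 / (2 * γ))) :=
  stmt8_general γ C₂ z₀ A hγ hC₂ hz₀ B hB z hz0 hdiff hineq
end

section
/- Let d ≥ 1 and γ > 0. Let u : ℝ × ℝ^d → ℝ be smooth with u(t,·) supported in a fixed compact set K ⊂ ℝ^d for every t ≥ 0, let f : ℝ × ℝ^d → ℝ be continuous with f(t,·) square-integrable for each t, and suppose ∂u/∂t(t,x) = (∫_{ℝ^d} u(t,y)² dy)^γ Δu(t,x) + f(t,x) for all t ≥ 0 and x ∈ ℝ^d, with ∫_{ℝ^d} u(t,y)² dy > 0 for all t ≥ 0. Assume there is a constant C₂ > 0 such that C₂ ∫_{ℝ^d} u(t,y)² dy ≤ ∫_{ℝ^d} |∇u(t,y)|² dy for all t ≥ 0. Set y₀ = ∫_{ℝ^d} u(0,y)² dy > 0, let A be a real number with 0 < A < C₂ y₀^{(2γ+1)/2}, set B = 2γC₂ y₀^γ − 2γA/y₀^{1/2}, and assume (∫_{ℝ^d} f(t,y)² dy)^{1/2} ≤ A (1 + Bt)^{−(2γ+1)/(2γ)} for all t ≥ 0.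 Then for every t ≥ 0: ∫_{ℝ^d} u(t,y)² dy ≤ y₀ / (1 + Bt)^{1/γ}. -/
open MeasureTheory Set Function Topology Filter

/-- The spatial Laplacian `Δg = Σᵢ ∂²g/∂xᵢ²` of a function on `ℝ^d`. -/
noncomputable def lap {d : ℕ} (g : EuclideanSpace ℝ (Fin d) → ℝ)
    (x : EuclideanSpace ℝ (Fin d)) : ℝ :=
  ∑ i : Fin d, fderiv ℝ (fun y => fderiv ℝ g y (EuclideanSpace.single i 1)) x
    (EuclideanSpace.single i 1)

theorem stmt18_grad_norm_sq (d : ℕ) (g : EuclideanSpace ℝ (Fin d) → ℝ)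
    (x : EuclideanSpace ℝ (Fin d)) :
    ‖gradient g x‖ ^ 2 = ∑ i : Fin d, (fderiv ℝ g x (EuclideanSpace.single i 1)) ^ 2 := by
  have h : ∀ i, fderiv ℝ g x (EuclideanSpace.single i 1) = gradient g x i := by
    intro i
    have := InnerProductSpace.toDual_symm_apply (𝕜 := ℝ) (E := EuclideanSpace ℝ (Fin d))
      (x := EuclideanSpace.single i 1) (y := fderiv ℝ g x)
    rw [← this, gradient, real_inner_comm]
    simp [EuclideanSpace.inner_single_right, EuclideanSpace.inner_single_left]
  simp_rw [h]
  rw [EuclideanSpace.norm_eq, Real.sq_sqrt (by positivity)]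
  simp [sq_abs]

set_option maxHeartbeats 1000000 in
theorem stmt18_ibp (d : ℕ) (v : EuclideanSpace ℝ (Fin d) → ℝ) (hv : ContDiff ℝ (⊤ : ℕ∞) v)
    (hcs : HasCompactSupport v) :
    ∫ x, v x * lap v x = - ∫ x, ‖gradient v x‖ ^ 2 := by
  set P : Fin d → EuclideanSpace ℝ (Fin d) → ℝ :=
    fun i x => fderiv ℝ v x (EuclideanSpace.single i 1) with hP
  have hPc : ∀ i, ContDiff ℝ (⊤ : ℕ∞) (P i) := fun i =>
    (hv.fderiv_right (by simp)).clm_apply contDiff_const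
  have hPcs : ∀ i, HasCompactSupport (P i) := fun i =>
    hcs.fderiv_apply ℝ (EuclideanSpace.single i 1)
  have hQc : ∀ i, Continuous (fun x => fderiv ℝ (P i) x (EuclideanSpace.single i 1)) := fun i =>
    ContDiff.continuous (n := (⊤ : ℕ∞))
      ((ContDiff.fderiv_right (m := (⊤ : ℕ∞)) (hPc i) (by simp)).clm_apply contDiff_const)
  have key : ∀ i, ∫ x, v x * fderiv ℝ (P i) x (EuclideanSpace.single i 1)
      = - ∫ x, (P i x) ^ 2 := by
    intro i
    have h1 : Integrable (fun x => fderiv ℝ v x (EuclideanSpace.single i 1) * P i x) :=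
      (((hPc i).continuous.mul (hPc i).continuous)).integrable_of_hasCompactSupport
        ((hPcs i).mul_right)
    have h2 : Integrable (fun x => v x * fderiv ℝ (P i) x (EuclideanSpace.single i 1)) :=
      (hv.continuous.mul (hQc i)).integrable_of_hasCompactSupport (hcs.mul_right)
    have h3 : Integrable (fun x => v x * P i x) :=
      (hv.continuous.mul (hPc i).continuous).integrable_of_hasCompactSupport (hcs.mul_right)
    rw [integral_mul_fderiv_eq_neg_fderiv_mul_of_integrable h1 h2 h3
      (fun x _ => (hv.differentiable (by simp)).differentiableAt) (fun x _ => ((hPc i).differentiable (by simp)).differentiableAt)]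
    congr 1
    apply integral_congr_ae (Filter.Eventually.of_forall fun x => ?_)
    simp only [hP, sq]
  have h2 : ∀ i, Integrable (fun x => v x * fderiv ℝ (P i) x (EuclideanSpace.single i 1)) :=
    fun i => (hv.continuous.mul (hQc i)).integrable_of_hasCompactSupport (hcs.mul_right)
  have hsq : ∀ i, Integrable (fun x => (P i x) ^ 2) := fun i =>
    ((hPc i).continuous.fun_pow 2).integrable_of_hasCompactSupport
      ((hPcs i).comp_left (g := fun a : ℝ => a ^ 2) (by norm_num))
  have e1 : (fun x => v x * lap v x)
      = fun x => ∑ i : Fin d, v x * fderiv ℝ (P i) x (EuclideanSpace.single i 1) := by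
    funext x
    simp only [lap, hP]
    rw [Finset.mul_sum]
  have e2 : (fun x : EuclideanSpace ℝ (Fin d) => ‖gradient v x‖ ^ 2)
      = fun x => ∑ i : Fin d, (P i x) ^ 2 := by
    funext x
    simp only [hP]
    exact stmt18_grad_norm_sq d v x
  rw [e1, e2, integral_finset_sum _ (fun i _ => h2 i),
    integral_finset_sum _ (fun i _ => hsq i), ← Finset.sum_neg_distrib]
  exact Finset.sum_congr rfl (fun i _ => key i)

set_option maxHeartbeats 1000000 in
theorem stmt18_yderiv {d : ℕ} (u : ℝ → EuclideanSpace ℝ (Fin d) → ℝ)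
    (hu : ContDiff ℝ (⊤ : ℕ∞) (uncurry u))
    (K : Set (EuclideanSpace ℝ (Fin d))) (hK : IsCompact K)
    (hsupp : ∀ t, 0 ≤ t → support (u t) ⊆ K) (t : ℝ) (ht : 0 ≤ t) :
    HasDerivWithinAt (fun s => ∫ x, u s x ^ 2)
      (∫ x, 2 * u t x * fderiv ℝ (uncurry u) (t, x) (1, 0)) (Ici t) t := by
  have husc : ∀ s, ContDiff ℝ (⊤ : ℕ∞) (u s) := fun s => hu.comp (contDiff_const.prodMk contDiff_id)
  have hzero : ∀ s, 0 ≤ s → ∀ x, x ∉ K → u s x = 0 := by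
    intro s hs x hx
    by_contra h
    exact hx (hsupp s hs (mem_support.2 h))
  have hInt : ∀ s, 0 ≤ s → Integrable (fun x => u s x ^ 2) := by
    intro s hs
    refine ((husc s).continuous.fun_pow 2).integrable_of_hasCompactSupport ?_
    apply HasCompactSupport.comp_left (g := fun a : ℝ => a ^ 2) ?_ (by norm_num)
    exact HasCompactSupport.of_support_subset_isCompact hK (hsupp s hs)
  set F : ℝ × EuclideanSpace ℝ (Fin d) → ℝ := fun p => fderiv ℝ (uncurry u) p (1, 0) with hF
  have hFc : Continuous F := (hu.continuous_fderiv (by simp)).clm_apply continuous_const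
  have hDer : ∀ s x, HasDerivAt (fun τ => u τ x) (F (s, x)) s := by
    intro s x
    have h1 : HasFDerivAt (uncurry u) (fderiv ℝ (uncurry u) (s, x)) (s, x) :=
      (hu.differentiable (by simp)).differentiableAt.hasFDerivAt
    have h2 : HasDerivAt (fun τ : ℝ => (τ, x)) ((1:ℝ), (0:EuclideanSpace ℝ (Fin d))) s := by
      simpa using ((hasDerivAt_id s).prodMk (hasDerivAt_const s x))
    exact h1.comp_hasDerivAt s h2
  have hDer2 : ∀ s x, HasDerivAt (fun τ => u τ x ^ 2) (2 * u s x * F (s, x)) s := by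
    intro s x
    have := (hDer s x).fun_pow 2
    exact this.congr_deriv (by ring)
  set G : ℝ × EuclideanSpace ℝ (Fin d) → ℝ := fun p => 2 * u p.1 p.2 * F p with hG
  have hGc : Continuous G :=
    (continuous_const.mul (hu.continuous.comp continuous_id)).mul hFc
  obtain ⟨M, hM⟩ := (isCompact_Icc.prod hK).exists_bound_of_continuousOn
    (hGc.continuousOn (s := Icc t (t + 1) ×ˢ K))
  set l := 𝓝[Ici t \ {t}] t with hl
  have hl_le : l ≤ 𝓝[≠] t := nhdsWithin_mono t (fun s hs => hs.2)
  set g : ℝ → EuclideanSpace ℝ (Fin d) → ℝ := fun s x => (u s x ^ 2 - u t x ^ 2) / (s - t)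
    with hg
  have key : Filter.Tendsto (fun s => ∫ x, g s x) l (𝓝 (∫ x, 2 * u t x * F (t, x))) := by
    apply tendsto_integral_filter_of_dominated_convergence (K.indicator fun _ => M)
    · apply Filter.Eventually.of_forall
      intro s
      exact (((((husc s).continuous.fun_pow 2).sub ((husc t).continuous.fun_pow 2)).div_const
        (s - t))).aestronglyMeasurable
    · have h1 : ∀ᶠ s in l, s ∈ Ici t \ {t} := self_mem_nhdsWithin
      have h2 : ∀ᶠ s in l, s < t + 1 := by
        apply Filter.Tendsto.eventually_lt_const (by linarith) (f := fun s : ℝ => s)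
        exact tendsto_id.mono_left nhdsWithin_le_nhds
      filter_upwards [h1, h2] with s hs hs1
      apply Filter.Eventually.of_forall
      intro x
      by_cases hx : x ∈ K
      · have hts : t < s := lt_of_le_of_ne hs.1 (fun h => hs.2 h.symm)
        obtain ⟨c, hc, hceq⟩ := exists_hasDerivAt_eq_slope (fun τ => u τ x ^ 2)
          (fun τ => 2 * u τ x * F (τ, x)) hts
          (((hu.continuous.comp (continuous_id.prodMk continuous_const)).fun_pow 2).continuousOn)
          (fun τ _ => hDer2 τ x)
        rw [hg]
        simp only
        rw [← hceq, indicator_of_mem hx]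
        exact hM (c, x) ⟨⟨le_of_lt hc.1, by linarith [hc.2]⟩, hx⟩
      · rw [hg, indicator_of_notMem hx]
        simp only
        rw [hzero s (le_trans ht hs.1) x hx, hzero t ht x hx]
        simp
    · exact (integrable_indicator_iff hK.measurableSet).2
        (integrableOn_const hK.measure_lt_top.ne)
    · apply Filter.Eventually.of_forall
      intro x
      have := (hasDerivAt_iff_tendsto_slope.1 (hDer2 t x)).mono_left hl_le
      apply this.congr
      intro s
      rw [slope_def_field, hg]
  rw [hasDerivWithinAt_iff_tendsto_slope]
  apply key.congr'
  filter_upwards [self_mem_nhdsWithin] with s hs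
  have hst : s - t ≠ 0 := sub_ne_zero.2 (fun h => hs.2 h)
  have hs0 : (0:ℝ) ≤ s := le_trans ht hs.1
  rw [hg]
  simp only
  rw [integral_div, integral_sub (hInt s hs0) (hInt t ht), slope_def_field]

set_option maxHeartbeats 1000000 in
theorem stmt18_ycont {d : ℕ} (u : ℝ → EuclideanSpace ℝ (Fin d) → ℝ)
    (hu : ContDiff ℝ (⊤ : ℕ∞) (uncurry u))
    (K : Set (EuclideanSpace ℝ (Fin d))) (hK : IsCompact K)
    (hsupp : ∀ t, 0 ≤ t → support (u t) ⊆ K) :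
    ContinuousOn (fun s => ∫ x, u s x ^ 2) (Ici 0) := by
  have hzero : ∀ s, 0 ≤ s → ∀ x, x ∉ K → u s x = 0 := by
    intro s hs x hx
    by_contra h
    exact hx (hsupp s hs (mem_support.2 h))
  intro t ht
  unfold ContinuousWithinAt
  obtain ⟨M, hM⟩ := (isCompact_Icc.prod hK).exists_bound_of_continuousOn
    (Continuous.continuousOn (s := Icc 0 (t + 1) ×ˢ K) ((hu.continuous.pow 2)))
  apply tendsto_integral_filter_of_dominated_convergence (K.indicator fun _ => M)
  · apply Filter.Eventually.of_forall
    intro s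
    exact ((hu.continuous.comp (continuous_const.prodMk continuous_id)).fun_pow 2).aestronglyMeasurable
  · have h1 : ∀ᶠ s in 𝓝[Ici 0] t, s ∈ Ici (0:ℝ) := self_mem_nhdsWithin
    have h2 : ∀ᶠ s in 𝓝[Ici 0] t, s < t + 1 := by
      apply Filter.Tendsto.eventually_lt_const (by linarith) (f := fun s : ℝ => s)
      exact tendsto_id.mono_left nhdsWithin_le_nhds
    filter_upwards [h1, h2] with s hs hs1
    apply Filter.Eventually.of_forall
    intro x
    by_cases hx : x ∈ K
    · rw [indicator_of_mem hx]
      exact hM (s, x) ⟨⟨hs, le_of_lt hs1⟩, hx⟩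
    · rw [indicator_of_notMem hx, hzero s hs x hx]
      simp
  · exact (integrable_indicator_iff hK.measurableSet).2
      (integrableOn_const hK.measure_lt_top.ne)
  · apply Filter.Eventually.of_forall
    intro x
    have : Continuous (fun s => u s x ^ 2) :=
      (hu.continuous.comp (continuous_id.prodMk continuous_const)).fun_pow 2
    exact (this.tendsto t).mono_left nhdsWithin_le_nhds

theorem stmt18_CS {E : Type*} [MeasurableSpace E] {μ : Measure E} (v w : E → ℝ)
    (hv : MemLp v 2 μ) (hw : MemLp w 2 μ) :
    ∫ x, v x * w x ∂μ ≤ (∫ x, v x ^ 2 ∂μ) ^ ((1:ℝ)/2) * (∫ x, w x ^ 2 ∂μ) ^ ((1:ℝ)/2) := by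
  have hpq : Real.HolderConjugate 2 2 := Real.HolderConjugate.two_two
  have h2 : (ENNReal.ofReal (2:ℝ)) = 2 := by norm_num [ENNReal.ofReal_ofNat]
  have key := integral_mul_le_Lp_mul_Lq_of_nonneg (μ := μ) hpq
    (f := fun x => |v x|) (g := fun x => |w x|)
    (Filter.Eventually.of_forall fun x => abs_nonneg _)
    (Filter.Eventually.of_forall fun x => abs_nonneg _)
    (h2 ▸ hv.abs) (h2 ▸ hw.abs)
  have e1 : ∀ a : ℝ, |a| ^ (2:ℝ) = a ^ 2 := by
    intro a
    rw [show ((2:ℝ)) = ((2:ℕ):ℝ) by norm_num, Real.rpow_natCast, sq_abs]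
  calc ∫ x, v x * w x ∂μ ≤ |∫ x, v x * w x ∂μ| := le_abs_self _
    _ ≤ ∫ x, |v x| * |w x| ∂μ := by
        simpa [Real.norm_eq_abs] using norm_integral_le_integral_norm (fun x => v x * w x) (μ := μ)
    _ ≤ (∫ x, |v x| ^ (2:ℝ) ∂μ) ^ ((1:ℝ)/2) * (∫ x, |w x| ^ (2:ℝ) ∂μ) ^ ((1:ℝ)/2) := key
    _ = (∫ x, v x ^ 2 ∂μ) ^ ((1:ℝ)/2) * (∫ x, w x ^ 2 ∂μ) ^ ((1:ℝ)/2) := by simp_rw [e1]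

set_option maxHeartbeats 2000000 in
/-- **polynomial decay with forcing, `γ > 0`.** For a smooth, compactly supported
(in space) solution of `∂u/∂t = (∫ u²)^γ Δu + f` on `[0,∞) × ℝ^d` with `∫ u(t)² > 0`,
satisfying the Poincaré inequality `C₂ ∫ u(t)² ≤ ∫ |∇u(t)|²`, with `y₀ = ∫ u(0)² > 0`,
`0 < A < C₂ y₀^{(2γ+1)/2}`, `B = 2γC₂ y₀^γ − 2γA/y₀^{1/2}` and
`(∫ f(t)²)^{1/2} ≤ A (1 + Bt)^{−(2γ+1)/(2γ)}` for all `t ≥ 0`, one has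
`∫ u(t)² ≤ y₀ / (1 + Bt)^{1/γ}` for every `t ≥ 0`. -/
theorem stmt18 (d : ℕ) (hd : 1 ≤ d) (γ : ℝ) (hγ : 0 < γ)
    (u : ℝ → EuclideanSpace ℝ (Fin d) → ℝ) (hu : ContDiff ℝ (⊤ : ℕ∞) (uncurry u))
    (K : Set (EuclideanSpace ℝ (Fin d))) (hK : IsCompact K)
    (hsupp : ∀ t, 0 ≤ t → support (u t) ⊆ K)
    (f : ℝ → EuclideanSpace ℝ (Fin d) → ℝ) (hf : Continuous (uncurry f))
    (hfL2 : ∀ t : ℝ, MemLp (f t) 2 volume)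
    (heq : ∀ t, 0 ≤ t → ∀ x, deriv (fun s => u s x) t
      = (∫ y, (u t y) ^ 2) ^ γ * lap (u t) x + f t x)
    (hpos : ∀ t, 0 ≤ t → 0 < ∫ y, (u t y) ^ 2)
    (C₂ : ℝ) (hC₂ : 0 < C₂)
    (hpoin : ∀ t, 0 ≤ t → C₂ * (∫ y, (u t y) ^ 2) ≤ ∫ y, ‖gradient (u t) y‖ ^ 2)
    (y₀ : ℝ) (hy₀ : y₀ = ∫ y, (u 0 y) ^ 2) (hy₀pos : 0 < y₀)
    (A : ℝ) (hA : 0 < A) (hA' : A < C₂ * y₀ ^ ((2 * γ + 1) / 2))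
    (B : ℝ) (hB : B = 2 * γ * C₂ * y₀ ^ γ - 2 * γ * A / y₀ ^ ((1:ℝ) / 2))
    (hfdec : ∀ t, 0 ≤ t →
      (∫ y, (f t y) ^ 2) ^ ((1:ℝ) / 2) ≤ A * (1 + B * t) ^ (-((2 * γ + 1) / (2 * γ)))) :
    ∀ t, 0 ≤ t → (∫ y, (u t y) ^ 2) ≤ y₀ / (1 + B * t) ^ ((1:ℝ) / γ) := by
  have hγ' : γ ≠ 0 := ne_of_gt hγ
  set y : ℝ → ℝ := fun t => ∫ x, u t x ^ 2 with hy
  have hy0half : (0:ℝ) < y₀ ^ ((1:ℝ)/2) := Real.rpow_pos_of_pos hy₀pos _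
  have hBpos : 0 < B := by
    have h1 : y₀ ^ ((2*γ+1)/2) = y₀ ^ γ * y₀ ^ ((1:ℝ)/2) := by
      rw [← Real.rpow_add hy₀pos]; ring_nf
    have h2 : A / y₀ ^ ((1:ℝ)/2) < C₂ * y₀ ^ γ := by
      rw [div_lt_iff₀ hy0half]
      calc A < C₂ * y₀ ^ ((2*γ+1)/2) := hA'
        _ = C₂ * y₀ ^ γ * y₀ ^ ((1:ℝ)/2) := by rw [h1]; ring
    have h3 : 0 < 2*γ*(C₂ * y₀ ^ γ - A / y₀ ^ ((1:ℝ)/2)) := by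
      apply mul_pos (by linarith) (by linarith)
    rw [hB]
    have : 2 * γ * C₂ * y₀ ^ γ - 2 * γ * A / y₀ ^ ((1:ℝ) / 2)
        = 2*γ*(C₂ * y₀ ^ γ - A / y₀ ^ ((1:ℝ)/2)) := by ring
    rw [this]; exact h3
  have hcpos : ∀ t, 0 ≤ t → (0:ℝ) < 1 + B * t := fun t ht => by nlinarith
  -- basic smoothness/support facts
  have husc : ∀ s, ContDiff ℝ (⊤ : ℕ∞) (u s) := fun s => hu.comp (contDiff_const.prodMk contDiff_id)
  have hucs : ∀ s, 0 ≤ s → HasCompactSupport (u s) := fun s hs =>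
    HasCompactSupport.of_support_subset_isCompact hK (hsupp s hs)
  have hlapc : ∀ s, Continuous (lap (u s)) := by
    intro s
    apply continuous_finset_sum
    intro i _
    have hQ : ContDiff ℝ (⊤ : ℕ∞) (fun x => fderiv ℝ (u s) x (EuclideanSpace.single i 1)) :=
      ((husc s).fderiv_right (by simp)).clm_apply contDiff_const
    exact ContDiff.continuous (n := (⊤ : ℕ∞))
      ((ContDiff.fderiv_right (m := (⊤ : ℕ∞)) hQ (by simp)).clm_apply contDiff_const)
  have hDer : ∀ t x, HasDerivAt (fun s => u s x) (fderiv ℝ (uncurry u) (t, x) (1, 0)) t := by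
    intro t x
    have h1 : HasFDerivAt (uncurry u) (fderiv ℝ (uncurry u) (t, x)) (t, x) :=
      (hu.differentiable (by simp)).differentiableAt.hasFDerivAt
    have h2 : HasDerivAt (fun s : ℝ => (s, x)) ((1:ℝ), (0:EuclideanSpace ℝ (Fin d))) t := by
      simpa using ((hasDerivAt_id t).prodMk (hasDerivAt_const t x))
    exact h1.comp_hasDerivAt t h2
  set D : ℝ → ℝ := fun t => ∫ x, 2 * u t x * fderiv ℝ (uncurry u) (t, x) (1, 0) with hD
  have hyd : ∀ t, 0 ≤ t → HasDerivWithinAt y (D t) (Ici t) t := fun t ht =>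
    stmt18_yderiv u hu K hK hsupp t ht
  have hycont : ContinuousOn y (Ici 0) := stmt18_ycont u hu K hK hsupp
  -- the differential inequality
  have hDle : ∀ t, 0 ≤ t → D t ≤ -(2*C₂) * ((y t) ^ γ * y t)
      + 2 * (y t) ^ ((1:ℝ)/2) * (A * (1 + B * t) ^ (-((2 * γ + 1) / (2 * γ)))) := by
    intro t ht
    have hder_eq : ∀ x, fderiv ℝ (uncurry u) (t, x) (1, 0)
        = (y t) ^ γ * lap (u t) x + f t x := by
      intro x
      rw [← (hDer t x).deriv]
      exact heq t ht x
    have hftc : Continuous (f t) := hf.comp (continuous_const.prodMk continuous_id)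
    have hIuL : Integrable (fun x => u t x * lap (u t) x) :=
      ((husc t).continuous.mul (hlapc t)).integrable_of_hasCompactSupport
        ((hucs t ht).mul_right)
    have hIuf : Integrable (fun x => u t x * f t x) :=
      ((husc t).continuous.mul hftc).integrable_of_hasCompactSupport ((hucs t ht).mul_right)
    have e : D t = 2 * ((y t) ^ γ * ∫ x, u t x * lap (u t) x) + 2 * ∫ x, u t x * f t x := by
      rw [hD]
      simp only
      have e0 : (fun x => 2 * u t x * fderiv ℝ (uncurry u) (t, x) (1, 0))
          = fun x => (2 * (y t) ^ γ) * (u t x * lap (u t) x) + 2 * (u t x * f t x) := by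
        funext x
        rw [hder_eq x]
        ring
      rw [e0, integral_add (hIuL.const_mul _) (hIuf.const_mul _), integral_const_mul,
        integral_const_mul]
      ring
    rw [e, stmt18_ibp d (u t) (husc t) (hucs t ht)]
    have hypos : 0 < y t := hpos t ht
    have hyγpos : 0 < (y t) ^ γ := Real.rpow_pos_of_pos hypos γ
    have hyhalf : (0:ℝ) ≤ (y t) ^ ((1:ℝ)/2) := (Real.rpow_pos_of_pos hypos _).le
    have hCS : ∫ x, u t x * f t x ≤ (y t) ^ ((1:ℝ)/2) * (∫ x, f t x ^ 2) ^ ((1:ℝ)/2) :=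
      stmt18_CS (u t) (f t)
        ((husc t).continuous.memLp_of_hasCompactSupport (hucs t ht)) (hfL2 t)
    have hfd := hfdec t ht
    have h2' : ∫ x, u t x * f t x
        ≤ (y t) ^ ((1:ℝ)/2) * (A * (1 + B * t) ^ (-((2 * γ + 1) / (2 * γ)))) :=
      le_trans hCS (mul_le_mul_of_nonneg_left hfd hyhalf)
    have h1' : (y t) ^ γ * (C₂ * y t) ≤ (y t) ^ γ * ∫ x, ‖gradient (u t) x‖ ^ 2 :=
      mul_le_mul_of_nonneg_left (hpoin t ht) hyγpos.le
    nlinarith [h1', h2']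
  -- the barrier argument
  intro T hT
  have hcT : 0 < 1 + B * T := hcpos T hT
  have hcT1 : (1:ℝ) ≤ 1 + B * T := by nlinarith
  apply le_of_forall_pos_le_add
  intro ε hε
  set w := y₀ + ε with hw
  have hwpos : 0 < w := by linarith
  have hwy : y₀ < w := by linarith
  set Z : ℝ → ℝ := fun t => w * (1 + B * t) ^ (-((1:ℝ)/γ)) with hZ
  set Z' : ℝ → ℝ := fun t => w * ((-((1:ℝ)/γ)) * (1 + B * t) ^ (-((1:ℝ)/γ) - 1) * B) with hZ'
  have hZd : ∀ x ∈ Ico 0 T, HasDerivWithinAt Z (Z' x) (Ici x) x := by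
    intro x hx
    have h1 : HasDerivAt (fun t => 1 + B * t) B x := by
      simpa using ((hasDerivAt_id x).const_mul B).const_add 1
    have h2 := (h1.rpow_const (p := -((1:ℝ)/γ)) (Or.inl (ne_of_gt (hcpos x hx.1))))
    have h3 := (h2.const_mul w).hasDerivWithinAt (s := Ici x)
    simp only [hZ, hZ']
    exact h3.congr_deriv (by ring)
  have hZc : ContinuousOn Z (Icc 0 T) := by
    apply ContinuousOn.mul continuousOn_const
    apply ContinuousOn.rpow_const
      ((continuous_const.add (continuous_const.mul continuous_id)).continuousOn)
    intro x hx
    exact Or.inl (ne_of_gt (hcpos x hx.1))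
  have hfr : ∀ x ∈ Ico 0 T, ∀ r, D x < r → ∃ᶠ z in 𝓝[>] x, slope y x z < r := by
    intro x hx r hr
    have h := (hyd x hx.1).Ioi_of_Ici
    have ht2 : Tendsto (slope y x) (𝓝[>] x) (𝓝 (D x)) :=
      (hasDerivWithinAt_iff_tendsto_slope' (lt_irrefl x)).1 h
    exact (ht2.eventually_lt_const hr).frequently
  have hinit : y 0 ≤ Z 0 := by
    have hy0 : y 0 = y₀ := hy₀.symm
    rw [hy0, hZ]
    simp only [mul_zero, add_zero, Real.one_rpow]
    linarith
  have hbound : ∀ x ∈ Ico 0 T, y x = Z x → D x < Z' x := by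
    intro x hx hyx
    have hx0 : 0 ≤ x := hx.1
    set c := 1 + B * x with hc
    have hcp : 0 < c := hcpos x hx0
    have hcnn : 0 ≤ c := hcp.le
    have hkey := hDle x hx0
    rw [hyx] at hkey
    have hZx : Z x = w * c ^ (-((1:ℝ)/γ)) := rfl
    have e1 : (Z x) ^ γ = w ^ γ * c ^ (-1:ℝ) := by
      rw [hZx, Real.mul_rpow hwpos.le (Real.rpow_nonneg hcnn _), ← Real.rpow_mul hcnn]
      congr 2
      field_simp
    have e2 : (Z x) ^ ((1:ℝ)/2) = w ^ ((1:ℝ)/2) * c ^ (-(1/(2*γ)):ℝ) := by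
      rw [hZx, Real.mul_rpow hwpos.le (Real.rpow_nonneg hcnn _), ← Real.rpow_mul hcnn]
      congr 2
      field_simp
    have e3 : c ^ (-(1/(2*γ)):ℝ) * c ^ (-((2*γ+1)/(2*γ))) = c ^ (-1:ℝ) * c ^ (-((1:ℝ)/γ)) := by
      rw [← Real.rpow_add hcp, ← Real.rpow_add hcp]
      congr 1
      field_simp
      ring
    have hmpos : 0 < c ^ (-1:ℝ) * c ^ (-((1:ℝ)/γ)) :=
      mul_pos (Real.rpow_pos_of_pos hcp _) (Real.rpow_pos_of_pos hcp _)
    have eL : -(2*C₂) * ((Z x) ^ γ * Z x)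
        + 2 * (Z x) ^ ((1:ℝ)/2) * (A * c ^ (-((2*γ+1)/(2*γ))))
        = (-(2*C₂) * (w ^ γ * w) + 2 * A * w ^ ((1:ℝ)/2)) * (c ^ (-1:ℝ) * c ^ (-((1:ℝ)/γ))) := by
      calc -(2*C₂) * ((Z x) ^ γ * Z x)
            + 2 * (Z x) ^ ((1:ℝ)/2) * (A * c ^ (-((2*γ+1)/(2*γ))))
          = -(2*C₂) * (w ^ γ * w) * (c ^ (-1:ℝ) * c ^ (-((1:ℝ)/γ)))
            + 2 * A * w ^ ((1:ℝ)/2) * (c ^ (-(1/(2*γ)):ℝ) * c ^ (-((2*γ+1)/(2*γ)))) := by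
            rw [e1, e2, hZx]; ring
        _ = (-(2*C₂) * (w ^ γ * w) + 2 * A * w ^ ((1:ℝ)/2))
            * (c ^ (-1:ℝ) * c ^ (-((1:ℝ)/γ))) := by rw [e3]; ring
    have eR : Z' x = (w * (-((1:ℝ)/γ)) * B) * (c ^ (-1:ℝ) * c ^ (-((1:ℝ)/γ))) := by
      have : c ^ (-((1:ℝ)/γ) - 1) = c ^ (-((1:ℝ)/γ)) * c ^ (-1:ℝ) := by
        rw [show -((1:ℝ)/γ) - 1 = (-((1:ℝ)/γ)) + (-1) by ring, Real.rpow_add hcp]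
      show w * ((-((1:ℝ)/γ)) * c ^ (-((1:ℝ)/γ) - 1) * B) = _
      rw [this]; ring
    -- the scalar strict inequality
    have hs1 : y₀ ^ γ < w ^ γ := Real.rpow_lt_rpow hy₀pos.le hwy hγ
    have hs2 : w ^ ((1:ℝ)/2) < w / y₀ ^ ((1:ℝ)/2) := by
      rw [lt_div_iff₀ hy0half]
      have h1 : y₀ ^ ((1:ℝ)/2) < w ^ ((1:ℝ)/2) := Real.rpow_lt_rpow hy₀pos.le hwy (by norm_num)
      have h2 : w ^ ((1:ℝ)/2) * w ^ ((1:ℝ)/2) = w := by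
        rw [← Real.rpow_add hwpos]
        norm_num
      calc w ^ ((1:ℝ)/2) * y₀ ^ ((1:ℝ)/2) < w ^ ((1:ℝ)/2) * w ^ ((1:ℝ)/2) :=
            (mul_lt_mul_of_pos_left h1 (Real.rpow_pos_of_pos hwpos _))
        _ = w := h2
    have hsc : -(2*C₂) * (w ^ γ * w) + 2 * A * w ^ ((1:ℝ)/2) < w * (-((1:ℝ)/γ)) * B := by
      rw [hB]
      have hg1 : w * (-((1:ℝ)/γ)) * (2 * γ * C₂ * y₀ ^ γ - 2 * γ * A / y₀ ^ ((1:ℝ)/2))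
          = -(2*C₂) * (y₀ ^ γ * w) + 2 * A * (w / y₀ ^ ((1:ℝ)/2)) := by
        field_simp
        ring
      rw [hg1]
      nlinarith [mul_lt_mul_of_pos_right hs1 (mul_pos (mul_pos two_pos hC₂) hwpos),
        mul_lt_mul_of_pos_left hs2 (by positivity : (0:ℝ) < 2*A)]
    calc D x ≤ (-(2*C₂) * (w ^ γ * w) + 2 * A * w ^ ((1:ℝ)/2))
          * (c ^ (-1:ℝ) * c ^ (-((1:ℝ)/γ))) := by rw [← eL]; exact hkey
      _ < (w * (-((1:ℝ)/γ)) * B) * (c ^ (-1:ℝ) * c ^ (-((1:ℝ)/γ))) :=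
          mul_lt_mul_of_pos_right hsc hmpos
      _ = Z' x := eR.symm
  have hfin : y T ≤ Z T :=
    image_le_of_liminf_slope_right_lt_deriv_boundary' (f := y) (f' := D)
      (hycont.mono (fun s hs => hs.1)) hfr hinit hZc hZd hbound (right_mem_Icc.2 hT)
  have hle1 : (1 + B * T) ^ (-((1:ℝ)/γ)) ≤ 1 :=
    Real.rpow_le_one_of_one_le_of_nonpos hcT1 (neg_nonpos.2 (by positivity))
  have hnn : (0:ℝ) ≤ (1 + B * T) ^ (-((1:ℝ)/γ)) := Real.rpow_nonneg hcT.le _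
  calc y T ≤ Z T := hfin
    _ = y₀ * (1 + B * T) ^ (-((1:ℝ)/γ)) + ε * (1 + B * T) ^ (-((1:ℝ)/γ)) := by
        rw [hZ]; ring
    _ ≤ y₀ / (1 + B * T) ^ ((1:ℝ)/γ) + ε := by
        apply add_le_add
        · rw [Real.rpow_neg hcT.le]
          exact le_of_eq (div_eq_mul_inv y₀ _).symm
        · exact mul_le_of_le_one_right hε.le hle1
end
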